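/- arXiv:math/0409207 — 5 statements merged into one kernel-verified Lean document; each statement's English description precedes it below -/
import Mathlib

section
/- If a ∈ ℤ_p satisfies (p^f - 1)·a ∈ ℤ for some f ≥ 1, then the orbit {a^{(i)} : i ≥ 0} under the map a ↦ a' is finite. -/
/-- If `a ∈ ℤ_p` satisfies `(p^f - 1)·a ∈ ℤ` for some `f ≥ 1`, then the orbit of `a`
under the Frobenius shift `a ↦ a'` (where `p·a' - a = μ_a ∈ {0,…,p-1}`) is finite. -/
theorem frobenius_orbit_finite (p : ℕ) [Fact p.Prime]
    (sh : ℤ_[p] → ℤ_[p]) (μ : ℤ_[p] → ℕ)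
    (hsh : ∀ a : ℤ_[p], μ a < p ∧ (p : ℤ_[p]) * sh a - a = (μ a : ℤ_[p]))
    (a : ℤ_[p]) (f : ℕ) (hf : 1 ≤ f) (n : ℤ)
    (hn : ((p : ℤ_[p]) ^ f - 1) * a = (n : ℤ_[p])) :
    (Set.range fun i : ℕ => sh^[i] a).Finite := by
  have hp : p.Prime := Fact.out
  have hp2 : (2 : ℕ) ≤ p := hp.two_le
  have hp2' : (2 : ℤ) ≤ (p : ℤ) := by exact_mod_cast hp2
  set c : ℤ_[p] := (p : ℤ_[p]) ^ f - 1 with hcdef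
  have hc : c = (((p : ℤ) ^ f - 1 : ℤ) : ℤ_[p]) := by push_cast; rfl
  have hpf2 : (2 : ℤ) ≤ (p : ℤ) ^ f :=
    le_trans hp2' (le_self_pow₀ (by linarith) (by omega))
  have hc0 : c ≠ 0 := by
    rw [hc]
    exact_mod_cast (by omega : (p : ℤ) ^ f - 1 ≠ 0)
  have hpne : (p : ℤ_[p]) ≠ 0 := by
    exact_mod_cast (Nat.cast_ne_zero (R := ℤ_[p])).mpr hp.ne_zero
  set B : ℤ := max |n| ((p : ℤ) ^ f - 1) with hBdef
  have hB1 : (p : ℤ) ^ f - 1 ≤ B := le_max_right _ _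
  have key : ∀ i : ℕ, ∃ m : ℤ, |m| ≤ B ∧ c * (sh^[i] a) = (m : ℤ_[p]) := by
    intro i
    induction i with
    | zero => exact ⟨n, le_max_left _ _, by simpa using hn⟩
    | succ i ih =>
      obtain ⟨m, hm, hcm⟩ := ih
      set b := sh^[i] a with hb
      obtain ⟨hμlt, hμ⟩ := hsh b
      have hμle : (μ b : ℤ) ≤ (p : ℤ) - 1 := by
        have : (μ b : ℤ) < (p : ℤ) := by exact_mod_cast hμlt
        omega
      have hμ0 : (0 : ℤ) ≤ (μ b : ℤ) := Int.natCast_nonneg _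
      set M : ℤ := m + ((p : ℤ) ^ f - 1) * (μ b : ℤ) with hMdef
      have h2 : (p : ℤ_[p]) * (c * sh b) = (M : ℤ_[p]) := by
        rw [hMdef, hc]
        push_cast
        linear_combination ((p : ℤ_[p]) ^ f - 1) * hμ + hcm
      have hdvd : (p : ℤ) ∣ M := by
        rw [← PadicInt.norm_int_lt_one_iff_dvd]
        calc ‖((M : ℤ) : ℤ_[p])‖ = ‖(p : ℤ_[p])‖ * ‖c * sh b‖ := by
              rw [← h2, norm_mul]
          _ ≤ ‖(p : ℤ_[p])‖ * 1 := by
              gcongr; exact PadicInt.norm_le_one _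
          _ < 1 := by
              rw [mul_one, PadicInt.norm_p]
              exact inv_lt_one_of_one_lt₀ (by exact_mod_cast hp.one_lt)
      obtain ⟨q, hq⟩ := hdvd
      refine ⟨q, ?_, ?_⟩
      · -- |q| ≤ B
        have hMle : |M| ≤ |m| + ((p : ℤ) ^ f - 1) * ((p : ℤ) - 1) := by
          calc |M| ≤ |m| + |((p : ℤ) ^ f - 1) * (μ b : ℤ)| := abs_add_le _ _
            _ = |m| + ((p : ℤ) ^ f - 1) * (μ b : ℤ) := by
                rw [abs_of_nonneg (mul_nonneg (by linarith) hμ0)]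
            _ ≤ |m| + ((p : ℤ) ^ f - 1) * ((p : ℤ) - 1) := by
                gcongr; omega
        have hMq : |M| = (p : ℤ) * |q| := by
          rw [hq, abs_mul, abs_of_nonneg (by positivity : (0:ℤ) ≤ (p:ℤ))]
        have hBn : 0 ≤ |m| := abs_nonneg _
        nlinarith [le_max_left |n| ((p : ℤ) ^ f - 1), hm]
      · -- c * sh b = q
        rw [Function.iterate_succ_apply', ← hb]
        apply mul_left_cancel₀ hpne
        rw [h2, hq]
        push_cast
        ring
  -- finish: orbit injects into a finite set via multiplication by c
  have himg : ((c * ·) '' Set.range fun i : ℕ => sh^[i] a) ⊆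
      (Int.cast : ℤ → ℤ_[p]) '' Set.Icc (-B) B := by
    rintro x ⟨y, ⟨i, rfl⟩, rfl⟩
    obtain ⟨m, hm, hcm⟩ := key i
    exact ⟨m, by rw [abs_le] at hm; exact ⟨hm.1, hm.2⟩, hcm.symm⟩
  have hfin : ((c * ·) '' Set.range fun i : ℕ => sh^[i] a).Finite :=
    ((Set.finite_Icc (-B) B).image _).subset himg
  exact Set.Finite.of_finite_image hfin
    ((mul_right_injective₀ hc0).injOn)
end

section
/- The Dwork symbol γ_p satisfies the symplectic relation γ_p(x,y)·γ_p(1-x, 1-y) = (-1)^{py-x}·p for all x ∈ ℤ_p and y ∈ ℤ_p with py - x ∈ ℤ, given the defining properties: γ_p(x+m, y+n) = (-π)^{n-m}·(Γ(x+m)Γ(y)/(Γ(x)Γ(y+n)))·γ_p(x,y) for m,n ∈ ℤ (interpreted via Pochhammer products), γ_p(x,y) = π^μ·Γ_p(x) when μ = py - x ∈ {0,…,p-1}, and the reflection formula Γ_p(x)·Γ_p(1-x) = -(-1)^t where t ∈ {0,…,p-1}, t ≡ -x (mod p). -/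
lemma aux_sign {p : ℕ} [Fact p.Prime] {K : Type*} [Field K] (ι : ℤ_[p] →+* K)
    (w : ℤ_[p]) (n : ℕ) :
    (∏ i ∈ Finset.range n, ι ((1 - (w + (n : ℤ_[p]))) + (i : ℤ_[p]))) =
      (-1 : K) ^ n * ∏ i ∈ Finset.range n, ι (w + (i : ℤ_[p])) := by
  have h1 : ∀ i ∈ Finset.range n, ι ((1 - (w + (n : ℤ_[p]))) + (i : ℤ_[p])) =
      (-1 : K) * ι (w + ((n - 1 - i : ℕ) : ℤ_[p])) := by
    intro i hi
    rw [Finset.mem_range] at hi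
    have hc : ((n - 1 - i : ℕ) : ℤ_[p]) = (n : ℤ_[p]) - 1 - (i : ℤ_[p]) := by
      have h : ((n - 1 - i : ℕ) : ℤ) = (n : ℤ) - 1 - i := by omega
      exact_mod_cast congrArg (fun t : ℤ => (t : ℤ_[p])) h
    rw [hc, show (1 - (w + (n : ℤ_[p])) + (i : ℤ_[p])) =
      -(w + ((n : ℤ_[p]) - 1 - (i : ℤ_[p]))) by ring, map_neg, neg_one_mul]
  calc (∏ i ∈ Finset.range n, ι ((1 - (w + (n : ℤ_[p]))) + (i : ℤ_[p])))
      = ∏ i ∈ Finset.range n, ((-1 : K) * ι (w + ((n - 1 - i : ℕ) : ℤ_[p]))) :=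
        Finset.prod_congr rfl h1
    _ = (-1 : K) ^ n * ∏ i ∈ Finset.range n, ι (w + ((n - 1 - i : ℕ) : ℤ_[p])) := by
        rw [Finset.prod_mul_distrib, Finset.prod_const, Finset.card_range]
    _ = (-1 : K) ^ n * ∏ i ∈ Finset.range n, ι (w + (i : ℤ_[p])) := by
        rw [Finset.prod_range_reflect (fun i => ι (w + (i : ℤ_[p]))) n]

lemma aux_engine (p : ℕ) [Fact p.Prime] (K : Type*) [Field K]
    (ι : ℤ_[p] →+* K) (π : K) (hπ : π ^ (p - 1) = -(p : K)) (hπ0 : π ≠ 0)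
    (Γp : ℤ_[p] → K) (γ : ℤ_[p] → ℤ_[p] → K)
    (htrans : ∀ x y : ℤ_[p], (∃ μ : ℤ, (p : ℤ_[p]) * y - x = (μ : ℤ_[p])) →
      ∀ m n : ℕ,
        γ (x + (m : ℤ_[p])) (y + (n : ℤ_[p])) * ∏ i ∈ Finset.range n, ι (y + (i : ℤ_[p])) =
          (-π) ^ ((n : ℤ) - (m : ℤ)) * (∏ i ∈ Finset.range m, ι (x + (i : ℤ_[p]))) * γ x y)
    (hdef : ∀ x y : ℤ_[p], ∀ μ : ℕ, μ < p → (p : ℤ_[p]) * y - x = (μ : ℤ_[p]) →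
      γ x y = π ^ μ * Γp x)
    (hrefl : ∀ x : ℤ_[p], ∀ t : ℕ, t < p → (∃ z : ℤ_[p], x + (t : ℤ_[p]) = p * z) →
      Γp x * Γp (1 - x) = -(-1 : K) ^ t)
    (x y : ℤ_[p]) (μ : ℤ) (hμ : (p : ℤ_[p]) * y - x = (μ : ℤ_[p]))
    (a b μ' : ℕ) (hμ'p : μ' < p) (hab : μ + (p : ℤ) * b - a = (μ' : ℤ))
    (hP : (∏ i ∈ Finset.range a, ι (x + (i : ℤ_[p]))) ≠ 0) :
    γ x y * γ (1 - x) (1 - y) = (-1 : K) ^ (a + b) * (-1 : K) ^ μ' * p := by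
  have hp2 : 2 ≤ p := (Fact.out : p.Prime).two_le
  have habC : ((μ : ℤ_[p]) + (p : ℤ_[p]) * b - a) = ((μ' : ℕ) : ℤ_[p]) := by
    have := congrArg (fun t : ℤ => (t : ℤ_[p])) hab
    push_cast at this ⊢
    exact this
  have h1 := htrans x y ⟨μ, hμ⟩ a b
  have hXY : (p : ℤ_[p]) * (y + (b : ℤ_[p])) - (x + (a : ℤ_[p])) = ((μ' : ℕ) : ℤ_[p]) := by
    push_cast
    push_cast at habC
    linear_combination hμ + habC
  have hdef1 := hdef (x + (a : ℤ_[p])) (y + (b : ℤ_[p])) μ' hμ'p hXY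
  set ν : ℕ := p - 1 - μ' with hνdef
  have hν : ν < p := by omega
  have hν2 : μ' + ν = p - 1 := by omega
  have hXY' : (p : ℤ_[p]) * (1 - (y + (b : ℤ_[p]))) - (1 - (x + (a : ℤ_[p]))) = ((ν : ℕ) : ℤ_[p]) := by
    have hcast : ((ν : ℕ) : ℤ_[p]) = (p : ℤ_[p]) - 1 - (μ' : ℤ_[p]) := by
      have h : ((ν : ℕ) : ℤ) = (p : ℤ) - 1 - μ' := by omega
      have := congrArg (fun t : ℤ => (t : ℤ_[p])) h
      push_cast at this
      exact this
    rw [hcast]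
    push_cast at habC ⊢
    linear_combination -hμ - habC
  have hdef2 := hdef (1 - (x + (a : ℤ_[p]))) (1 - (y + (b : ℤ_[p]))) ν hν hXY'
  have hrefl1 := hrefl (x + (a : ℤ_[p])) μ' hμ'p ⟨y + (b : ℤ_[p]), by
    push_cast at habC ⊢
    linear_combination -hμ - habC⟩
  have h2 := htrans (1 - (x + (a : ℤ_[p]))) (1 - (y + (b : ℤ_[p])))
    ⟨(p : ℤ) - 1 - μ', by push_cast at habC ⊢; linear_combination -hμ - habC⟩ a b
  rw [show (1 - (x + (a : ℤ_[p]))) + (a : ℤ_[p]) = 1 - x by ring,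
      show (1 - (y + (b : ℤ_[p]))) + (b : ℤ_[p]) = 1 - y by ring,
      aux_sign ι y b, aux_sign ι x a, hdef2] at h2
  rw [hdef1] at h1
  have hC : (-π) ^ ((b : ℤ) - (a : ℤ)) ≠ 0 := zpow_ne_zero _ (neg_ne_zero.mpr hπ0)
  have key : ((-π) ^ ((b : ℤ) - (a : ℤ)) * (∏ i ∈ Finset.range a, ι (x + (i : ℤ_[p])))) *
      ((-1 : K) ^ b * (γ x y * γ (1 - x) (1 - y))) =
      ((-π) ^ ((b : ℤ) - (a : ℤ)) * (∏ i ∈ Finset.range a, ι (x + (i : ℤ_[p])))) *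
      ((-1 : K) ^ a * (π ^ μ' * π ^ ν * (Γp (x + (a : ℤ_[p])) * Γp (1 - (x + (a : ℤ_[p])))))) := by
    linear_combination (-(γ (1 - x) (1 - y)) * (-1 : K) ^ b) * h1 +
      (π ^ μ' * Γp (x + (a : ℤ_[p]))) * h2
  have h3 := mul_left_cancel₀ (mul_ne_zero hC hP) key
  rw [hrefl1, ← pow_add, hν2, hπ] at h3
  have hbb : (-1 : K) ^ b * (-1 : K) ^ b = 1 := by
    rw [← pow_add]
    exact Even.neg_one_pow ⟨b, rfl⟩
  linear_combination ((-1 : K) ^ b) * h3 - (γ x y * γ (1 - x) (1 - y)) * hbb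

lemma aux_caseB (p : ℕ) [Fact p.Prime] (K : Type*) [Field K]
    (ι : ℤ_[p] →+* K) (π : K) (hπ0 : π ≠ 0)
    (hinj : ∀ z : ℤ_[p], z ≠ 0 → ι z ≠ 0)
    (Γp : ℤ_[p] → K) (γ : ℤ_[p] → ℤ_[p] → K)
    (htrans : ∀ x y : ℤ_[p], (∃ μ : ℤ, (p : ℤ_[p]) * y - x = (μ : ℤ_[p])) →
      ∀ m n : ℕ,
        γ (x + (m : ℤ_[p])) (y + (n : ℤ_[p])) * ∏ i ∈ Finset.range n, ι (y + (i : ℤ_[p])) =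
          (-π) ^ ((n : ℤ) - (m : ℤ)) * (∏ i ∈ Finset.range m, ι (x + (i : ℤ_[p]))) * γ x y)
    (hdef : ∀ x y : ℤ_[p], ∀ μ : ℕ, μ < p → (p : ℤ_[p]) * y - x = (μ : ℤ_[p]) →
      γ x y = π ^ μ * Γp x)
    (hrefl : ∀ x : ℤ_[p], ∀ t : ℕ, t < p → (∃ z : ℤ_[p], x + (t : ℤ_[p]) = p * z) →
      Γp x * Γp (1 - x) = -(-1 : K) ^ t)
    (x y : ℤ_[p]) (μ : ℤ) (hμ : (p : ℤ_[p]) * y - x = (μ : ℤ_[p]))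
    (i : ℕ) (hx : x + (i : ℤ_[p]) = 0) (hy : ∀ j : ℕ, y + (j : ℤ_[p]) ≠ 0) : False := by
  have hp2 : 2 ≤ p := (Fact.out : p.Prime).two_le
  have hp0 : (0 : ℤ) < p := by omega
  set n : ℕ := i + 1 + μ.natAbs with hndef
  set s : ℤ := μ + p * n - (i + 1) with hsdef
  have hs : 0 ≤ s := by
    have h1 : -(μ.natAbs : ℤ) ≤ μ := by omega
    have h2 : (2 : ℤ) * n ≤ p * n := by
      have : (0 : ℤ) ≤ ((p : ℤ) - 2) * n := mul_nonneg (by omega) (by positivity)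
      nlinarith
    have h3 : (n : ℤ) = (i : ℤ) + 1 + μ.natAbs := by push_cast [hndef]; ring
    nlinarith
  set q : ℤ := s / p with hqdef
  set r : ℤ := s % p with hrdef
  have hr0 : 0 ≤ r := Int.emod_nonneg s (by omega)
  have hrp : r < p := Int.emod_lt_of_pos s hp0
  have hq0 : 0 ≤ q := Int.ediv_nonneg hs (le_of_lt hp0)
  have hsplit : (p : ℤ) * q + r = s := Int.mul_ediv_add_emod s p
  have hpq0 : 0 ≤ (p : ℤ) * q := by positivity
  set m : ℕ := i + 1 + ((p : ℤ) * q).toNat with hmdef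
  have hmZ : (m : ℤ) = (i : ℤ) + 1 + (p : ℤ) * q := by
    push_cast [hmdef]
    rw [Int.toNat_of_nonneg hpq0]
  have hinv : μ + (p : ℤ) * n - m = r := by
    rw [hmZ]; linarith [hsplit]
  have hXY : (p : ℤ_[p]) * (y + (n : ℤ_[p])) - (x + (m : ℤ_[p])) = ((r.toNat : ℕ) : ℤ_[p]) := by
    have h : (μ : ℤ) + (p : ℤ) * n - m = (r.toNat : ℤ) := by
      rw [Int.toNat_of_nonneg hr0]; exact hinv
    have hC := congrArg (fun t : ℤ => (t : ℤ_[p])) h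
    push_cast at hC ⊢
    linear_combination hμ + hC
  have hdefm := hdef (x + (m : ℤ_[p])) (y + (n : ℤ_[p])) r.toNat (by omega) hXY
  have hmcast : ((m : ℕ) : ℤ_[p]) = (i : ℤ_[p]) + 1 + (((p : ℤ) * q : ℤ) : ℤ_[p]) := by
    have := congrArg (fun t : ℤ => (t : ℤ_[p])) hmZ
    push_cast at this ⊢
    exact this
  have hz : (x + (m : ℤ_[p])) + (((p - 1 : ℕ) : ℕ) : ℤ_[p]) = (p : ℤ_[p]) * (((q + 1 : ℤ)) : ℤ_[p]) := by
    have hp1 : (((p - 1 : ℕ) : ℕ) : ℤ_[p]) = (p : ℤ_[p]) - 1 := by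
      have h : ((p - 1 : ℕ) : ℤ) = (p : ℤ) - 1 := by omega
      have := congrArg (fun t : ℤ => (t : ℤ_[p])) h
      push_cast at this ⊢
      exact this
    rw [hp1, hmcast]
    push_cast
    linear_combination hx
  have hΓ : Γp (x + (m : ℤ_[p])) ≠ 0 := by
    have h := hrefl (x + (m : ℤ_[p])) (p - 1) (by omega) ⟨((q + 1 : ℤ) : ℤ_[p]), hz⟩
    intro h0
    rw [h0, zero_mul] at h
    have : ((-1 : K) ^ (p - 1)) ≠ 0 := pow_ne_zero _ (by norm_num)
    exact this (neg_eq_zero.mp h.symm)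
  have hPzero : (∏ k ∈ Finset.range m, ι (x + (k : ℤ_[p]))) = 0 :=
    Finset.prod_eq_zero (Finset.mem_range.mpr (show i < m by omega)) (by rw [hx, map_zero])
  have h := htrans x y ⟨μ, hμ⟩ m n
  rw [hPzero, mul_zero, zero_mul, hdefm] at h
  have hQ : (∏ k ∈ Finset.range n, ι (y + (k : ℤ_[p]))) ≠ 0 :=
    Finset.prod_ne_zero_iff.mpr (fun k _ => hinj _ (hy k))
  exact (mul_ne_zero (mul_ne_zero (pow_ne_zero _ hπ0) hΓ) hQ) h

/-- The Dwork symbol `γ_p` satisfies the symplectic relation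
`γ_p(x,y)·γ_p(1-x,1-y) = (-1)^{py-x}·p`, given its defining translation property
(with `Γ`-ratios interpreted as Pochhammer products via an embedding `ι : ℤ_p → K`),
its normalization `γ_p(x,y) = π^μ·Γ_p(x)` when `μ = py - x ∈ {0,…,p-1}`, and the
reflection formula `Γ_p(x)·Γ_p(1-x) = -(-1)^t` for `t ∈ {0,…,p-1}`, `t ≡ -x mod p`. -/
theorem gammaP_symplectic (p : ℕ) [Fact p.Prime] (K : Type*) [Field K]
    (ι : ℤ_[p] →+* K) (π : K) (hπ : π ^ (p - 1) = -(p : K)) (hπ0 : π ≠ 0)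
    (Γp : ℤ_[p] → K) (γ : ℤ_[p] → ℤ_[p] → K)
    (htrans : ∀ x y : ℤ_[p], (∃ μ : ℤ, (p : ℤ_[p]) * y - x = (μ : ℤ_[p])) →
      ∀ m n : ℕ,
        γ (x + (m : ℤ_[p])) (y + (n : ℤ_[p])) * ∏ i ∈ Finset.range n, ι (y + (i : ℤ_[p])) =
          (-π) ^ ((n : ℤ) - (m : ℤ)) * (∏ i ∈ Finset.range m, ι (x + (i : ℤ_[p]))) * γ x y)
    (hdef : ∀ x y : ℤ_[p], ∀ μ : ℕ, μ < p → (p : ℤ_[p]) * y - x = (μ : ℤ_[p]) →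
      γ x y = π ^ μ * Γp x)
    (hrefl : ∀ x : ℤ_[p], ∀ t : ℕ, t < p → (∃ z : ℤ_[p], x + (t : ℤ_[p]) = p * z) →
      Γp x * Γp (1 - x) = -(-1 : K) ^ t) :
    ∀ x y : ℤ_[p], ∀ μ : ℤ, (p : ℤ_[p]) * y - x = (μ : ℤ_[p]) →
      γ x y * γ (1 - x) (1 - y) = (-1 : K) ^ μ * p := by
  intro x y μ hμ
  have hp2 : 2 ≤ p := (Fact.out : p.Prime).two_le
  have hpK : (p : K) ≠ 0 := by
    intro h
    apply hπ0
    have h2 : π ^ (p - 1) = 0 := by rw [hπ, h, neg_zero]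
    exact pow_eq_zero_iff (by omega : p - 1 ≠ 0) |>.mp h2
  have hinj : ∀ z : ℤ_[p], z ≠ 0 → ι z ≠ 0 := by
    intro z hz hz0
    have hspec := PadicInt.unitCoeff_spec hz
    have this2 := congrArg ι hspec
    rw [map_mul, map_pow, map_natCast, hz0] at this2
    have hu : ι ((PadicInt.unitCoeff hz : ℤ_[p])) ≠ 0 :=
      ((PadicInt.unitCoeff hz).isUnit.map ι).ne_zero
    exact (mul_ne_zero hu (pow_ne_zero _ hpK)) this2.symm
  rcases eq_or_ne p 2 with hp2' | hpne2
  · exfalso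
    subst hp2'
    have h0 := hrefl 0 0 (by norm_num) ⟨0, by norm_num⟩
    have h1 := hrefl 1 1 (by norm_num) ⟨1, by norm_num⟩
    norm_num at h0 h1
    apply hpK
    push_cast
    linear_combination h0 - h1 + 2 * (mul_comm (Γp 0) (Γp (1 - 0)))
  have hodd : Odd p := (Fact.out : p.Prime).odd_of_ne_two hpne2
  obtain ⟨kp, hkp⟩ := hodd
  have hkpZ : (p : ℤ) = 2 * kp + 1 := by exact_mod_cast congrArg (Nat.cast (R := ℤ)) hkp
  have negpow : ∀ (mm : ℤ) (nn : ℕ), mm % 2 = (nn : ℤ) % 2 → (-1 : K) ^ mm = (-1 : K) ^ nn := by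
    intro mm nn h
    rcases Int.even_or_odd mm with he | ho
    · rw [he.neg_one_zpow, Even.neg_one_pow (by
        rw [Int.even_iff] at he; rw [Nat.even_iff]; omega)]
    · rw [ho.neg_one_zpow, Odd.neg_one_pow (by
        rw [Int.odd_iff] at ho; rw [Nat.odd_iff]; omega)]
  by_cases H1 : ∃ ii : ℕ, x + (ii : ℤ_[p]) = 0
  · by_cases H2 : ∃ jj : ℕ, y + (jj : ℤ_[p]) = 0
    · obtain ⟨i, hi⟩ := H1
      obtain ⟨j, hj⟩ := H2
      have hc : ((μ : ℤ) : ℤ_[p]) = (((i : ℤ) - p * j : ℤ) : ℤ_[p]) := by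
        push_cast
        linear_combination -hμ + (p : ℤ_[p]) * hj - hi
      have hμval : μ = (i : ℤ) - (p : ℤ) * j := by exact_mod_cast hc
      have hab : μ + (p : ℤ) * j - i = ((0 : ℕ) : ℤ) := by rw [hμval]; push_cast; ring
      have hP : (∏ k ∈ Finset.range i, ι (x + (k : ℤ_[p]))) ≠ 0 := by
        refine Finset.prod_ne_zero_iff.mpr (fun k hk => hinj _ ?_)
        rw [Finset.mem_range] at hk
        intro h0
        have hki : ((k : ℕ) : ℤ_[p]) = ((i : ℕ) : ℤ_[p]) := by linear_combination h0 - hi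
        have := Nat.cast_injective (R := ℤ_[p]) hki
        omega
      have hE := aux_engine p K ι π hπ hπ0 Γp γ htrans hdef hrefl x y μ hμ i j 0
        (by omega) hab hP
      rw [hE]
      have hpar : (-1 : K) ^ μ = (-1 : K) ^ (i + j) := by
        apply negpow
        have hlin : μ = 2 * (-((kp : ℤ) * j) - j) + ((i : ℤ) + j) := by
          rw [hμval, hkpZ]; ring
        set T : ℤ := (kp : ℤ) * j with hT
        omega
      rw [hpar, pow_zero, mul_one]
    · exfalso
      obtain ⟨i, hi⟩ := H1
      exact aux_caseB p K ι π hπ0 hinj Γp γ htrans hdef hrefl x y μ hμ i hi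
        (not_exists.mp H2)
  · by_cases H2 : ∃ jj : ℕ, y + (jj : ℤ_[p]) = 0
    · obtain ⟨j, hj⟩ := H2
      exfalso
      rcases le_or_gt 0 ((p : ℤ) * j + μ) with hcge | hclt
      · apply H1
        refine ⟨((p : ℤ) * j + μ).toNat, ?_⟩
        have hcast : ((((p : ℤ) * j + μ).toNat : ℕ) : ℤ_[p]) = (((p : ℤ) * j + μ : ℤ) : ℤ_[p]) := by
          have h := Int.toNat_of_nonneg hcge
          exact_mod_cast congrArg (fun t : ℤ => (t : ℤ_[p])) h
        rw [hcast]
        push_cast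
        linear_combination (p : ℤ_[p]) * hj - hμ
      · apply aux_caseB p K ι π hπ0 hinj Γp γ htrans hdef hrefl (1 - x) (1 - y)
          ((p : ℤ) - 1 - μ) ?_ ((-((p : ℤ) * j) - μ - 1).toNat) ?_ ?_
        · push_cast
          linear_combination -hμ
        · have hge : 0 ≤ -((p : ℤ) * j) - μ - 1 := by omega
          have hcast : (((-((p : ℤ) * j) - μ - 1).toNat : ℕ) : ℤ_[p]) =
              (((-((p : ℤ) * j) - μ - 1 : ℤ)) : ℤ_[p]) := by
            have h := Int.toNat_of_nonneg hge
            exact_mod_cast congrArg (fun t : ℤ => (t : ℤ_[p])) h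
          rw [hcast]
          push_cast
          linear_combination hμ - (p : ℤ_[p]) * hj
        · intro k h0
          have hcast : ((1 + j + k : ℕ) : ℤ_[p]) = 0 := by
            push_cast
            linear_combination h0 + hj
          have := Nat.cast_eq_zero.mp hcast
          omega
    · push_neg at H1 H2
      have hm00 : 0 ≤ μ % (p : ℤ) := Int.emod_nonneg μ (by omega)
      have hm0p : μ % (p : ℤ) < p := Int.emod_lt_of_pos μ (by omega)
      set b : ℕ := (μ % (p : ℤ) - μ).toNat with hbdef
      have hba : 0 ≤ μ - μ % (p : ℤ) + (p : ℤ) * b := by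
        have h1 : (μ % (p : ℤ) - μ) ≤ (b : ℤ) := Int.self_le_toNat _
        have h2 : (b : ℤ) ≤ (p : ℤ) * b := by nlinarith [Int.natCast_nonneg b]
        linarith
      set a : ℕ := (μ - μ % (p : ℤ) + (p : ℤ) * b).toNat with hadef
      have haZ : (a : ℤ) = μ - μ % (p : ℤ) + (p : ℤ) * b := Int.toNat_of_nonneg hba
      have hab : μ + (p : ℤ) * b - a = ((μ % (p : ℤ)).toNat : ℤ) := by
        rw [haZ, Int.toNat_of_nonneg hm00]; ring
      have hμ'p : (μ % (p : ℤ)).toNat < p := by omega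
      have hP : (∏ k ∈ Finset.range a, ι (x + (k : ℤ_[p]))) ≠ 0 :=
        Finset.prod_ne_zero_iff.mpr (fun k _ => hinj _ (H1 k))
      have hE := aux_engine p K ι π hπ hπ0 Γp γ htrans hdef hrefl x y μ hμ a b
        ((μ % (p : ℤ)).toNat) hμ'p hab hP
      rw [hE]
      have hpar : (-1 : K) ^ μ = (-1 : K) ^ (a + b + (μ % (p : ℤ)).toNat) := by
        apply negpow
        have hlin : μ = 2 * (-((kp : ℤ) * b) - b) + ((a : ℤ) + b + (μ % (p : ℤ)).toNat) := by
          rw [Int.toNat_of_nonneg hm00]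
          linear_combination -haZ - (b : ℤ) * hkpZ
        set T : ℤ := (kp : ℤ) * b with hT
        omega
      rw [hpar]
      ring
end

section
/- Morita's p-adic gamma function satisfies: for x ∈ ℤ_p, Γ_p(x)·Γ_p(1-x) = -(-1)^t where t ∈ {0,1,…,p-1} and t ≡ -x (mod p). -/
/-!
By continuity and the density of `ℕ` in `ℤ_p`, the defining products give the functional equation
`Γ_p(x+1) = -x Γ_p(x)` for units `x` and `Γ_p(x+1) = -Γ_p(x)` for `x ∈ pℤ_p`. Hence
`f(x) = Γ_p(x) Γ_p(1-x)` satisfies `f(x+1) = -f(x)` at units and `f(x+1) = f(x)` on `pℤ_p`.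
Walking from `y ∈ pℤ_p` to `y + p` meets `p - 1` units, an even number, so `z ↦ f(pz)` is
`1`-periodic, hence constant, equal to `f(0) = Γ_p(0) Γ_p(1) = -1`. Finally `x, …, x+t-1` are
units and `x + t ∈ pℤ_p`, so `f(x) = (-1)^t f(x+t) = -(-1)^t`.
-/

open Finset

namespace PadicInt

variable {p : ℕ} [Fact p.Prime]

theorem isClopen_setOf_norm_lt_one : IsClopen {x : ℤ_[p] | ‖x‖ < 1} := by
  simpa [Metric.ball] using IsUltrametricDist.isClopen_ball (0 : ℤ_[p]) 1

theorem norm_add_natCast_lt_one_iff {y : ℤ_[p]} (hy : ‖y‖ < 1) (n : ℕ) :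
    ‖y + n‖ < 1 ↔ p ∣ n := by
  rw [norm_lt_one_iff_dvd] at hy
  rw [norm_lt_one_iff_dvd, dvd_add_right hy, ← norm_lt_one_iff_dvd,
    norm_natCast_lt_one_iff]

theorem apply_eq_apply_zero_of_periodic {X : Type*} [TopologicalSpace X] [T2Space X]
    {g : ℤ_[p] → X} (hg : Continuous g) (hper : Function.Periodic g 1) (z : ℤ_[p]) :
    g z = g 0 :=
  congrFun (denseRange_natCast.equalizer hg continuous_const
    (funext fun n => by simpa using hper.nat_mul_eq n)) z

theorem not_norm_add_natCast_lt_one {x : ℤ_[p]} {t j : ℕ} (hxt : ‖x + t‖ < 1) (ht : t < p)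
    (hj : j < t) : ¬‖x + j‖ < 1 := by
  intro hxj
  have hdvd : p ∣ t - j := by
    rwa [← norm_add_natCast_lt_one_iff hxj, add_assoc, ← Nat.cast_add, Nat.add_sub_cancel' hj.le]
  have := Nat.le_of_dvd (by omega) hdvd
  omega

end PadicInt

noncomputable def moritaGammaFactor (p : ℕ) [Fact p.Prime] (x : ℤ_[p]) : ℤ_[p] :=
  if ‖x‖ < 1 then -1 else -x

noncomputable def reflectionProduct {p : ℕ} [Fact p.Prime] (Γp : ℤ_[p] → ℤ_[p]) (y : ℤ_[p]) :
    ℤ_[p] :=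
  Γp y * Γp (1 - y)

section MoritaGamma

variable {p : ℕ} [Fact p.Prime] {Γp : ℤ_[p] → ℤ_[p]}

theorem continuous_moritaGammaFactor : Continuous (moritaGammaFactor p) :=
  continuous_const.if (fun _ ha => by
    rw [PadicInt.isClopen_setOf_norm_lt_one.frontier_eq] at ha
    exact ha.elim) continuous_neg

theorem moritaGammaFactor_natCast (n : ℕ) :
    moritaGammaFactor p n = if p ∣ n then -1 else -(n : ℤ_[p]) := by
  simp only [moritaGammaFactor, PadicInt.norm_natCast_lt_one_iff]

theorem moritaGamma_natCast_succ
    (hval : ∀ n : ℕ, Γp (n : ℤ_[p]) =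
      (-1) ^ n * ∏ j ∈ (Ico 1 n).filter (fun j => ¬ (p ∣ j)), (j : ℤ_[p])) (n : ℕ) :
    Γp (n + 1) = moritaGammaFactor p n * Γp n := by
  rw [← Nat.cast_succ, hval, hval, moritaGammaFactor_natCast]
  rcases Nat.eq_zero_or_pos n with rfl | hn
  · simp
  · rw [prod_filter, prod_filter, prod_Ico_succ_top hn, pow_succ]
    split_ifs <;> ring

theorem moritaGamma_add_one (hcont : Continuous Γp)
    (hval : ∀ n : ℕ, Γp (n : ℤ_[p]) =
      (-1) ^ n * ∏ j ∈ (Ico 1 n).filter (fun j => ¬ (p ∣ j)), (j : ℤ_[p])) (x : ℤ_[p]) :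
    Γp (x + 1) = moritaGammaFactor p x * Γp x :=
  congrFun (PadicInt.denseRange_natCast.equalizer (hcont.comp (continuous_add_const 1))
    (continuous_moritaGammaFactor.mul hcont) (funext (moritaGamma_natCast_succ hval))) x

theorem reflectionProduct_add_one_of_norm_lt_one
    (hstep : ∀ x, Γp (x + 1) = moritaGammaFactor p x * Γp x) {y : ℤ_[p]} (hy : ‖y‖ < 1) :
    reflectionProduct Γp (y + 1) = reflectionProduct Γp y := by
  have hy' : ‖-y‖ < 1 := by rwa [norm_neg]
  rw [reflectionProduct, reflectionProduct, sub_add_cancel_right, ← neg_add_eq_sub, hstep, hstep,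
    moritaGammaFactor, moritaGammaFactor, if_pos hy, if_pos hy']
  ring

theorem reflectionProduct_add_one_of_not_norm_lt_one
    (hstep : ∀ x, Γp (x + 1) = moritaGammaFactor p x * Γp x) {y : ℤ_[p]} (hy : ¬‖y‖ < 1) :
    reflectionProduct Γp (y + 1) = -reflectionProduct Γp y := by
  have hy' : ¬‖-y‖ < 1 := by rwa [norm_neg]
  rw [reflectionProduct, reflectionProduct, sub_add_cancel_right, ← neg_add_eq_sub, hstep, hstep,
    moritaGammaFactor, moritaGammaFactor, if_neg hy, if_neg hy']
  ring

theorem reflectionProduct_add_natCast (hstep : ∀ x, Γp (x + 1) = moritaGammaFactor p x * Γp x)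
    (y : ℤ_[p]) : ∀ k : ℕ, (∀ j < k, ¬‖y + j‖ < 1) →
      reflectionProduct Γp (y + k) = (-1) ^ k * reflectionProduct Γp y
  | 0, _ => by simp
  | k + 1, hy => by
    rw [Nat.cast_succ, ← add_assoc,
      reflectionProduct_add_one_of_not_norm_lt_one hstep (hy k k.lt_succ_self),
      reflectionProduct_add_natCast hstep y k fun j hj => hy j (hj.trans k.lt_succ_self), pow_succ]
    ring

theorem reflectionProduct_add_prime (hstep : ∀ x, Γp (x + 1) = moritaGammaFactor p x * Γp x)
    (hodd : Odd p) {y : ℤ_[p]} (hy : ‖y‖ < 1) :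
    reflectionProduct Γp (y + p) = reflectionProduct Γp y := by
  have hunits : ∀ j < p - 1, ¬‖y + 1 + j‖ < 1 := by
    intro j hj hnorm
    rw [add_assoc, ← Nat.cast_one, ← Nat.cast_add, PadicInt.norm_add_natCast_lt_one_iff hy] at hnorm
    have := Nat.le_of_dvd (by omega) hnorm
    omega
  have hsplit : y + p = y + 1 + (p - 1 : ℕ) := by
    rw [Nat.cast_sub hodd.pos, Nat.cast_one]
    ring
  rw [hsplit, reflectionProduct_add_natCast hstep _ _ hunits,
    (Nat.Odd.sub_odd hodd odd_one).neg_one_pow, one_mul,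
    reflectionProduct_add_one_of_norm_lt_one hstep hy]

theorem reflectionProduct_eq_neg_one_of_norm_lt_one (hcont : Continuous Γp)
    (hval : ∀ n : ℕ, Γp (n : ℤ_[p]) =
      (-1) ^ n * ∏ j ∈ (Ico 1 n).filter (fun j => ¬ (p ∣ j)), (j : ℤ_[p]))
    (hodd : Odd p) {y : ℤ_[p]} (hy : ‖y‖ < 1) : reflectionProduct Γp y = -1 := by
  obtain ⟨z, rfl⟩ := (PadicInt.norm_lt_one_iff_dvd y).1 hy
  have hper : Function.Periodic (fun z => reflectionProduct Γp (p * z)) 1 := fun z => by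
    dsimp only
    rw [mul_add, mul_one]
    exact reflectionProduct_add_prime (moritaGamma_add_one hcont hval) hodd
      ((PadicInt.norm_lt_one_iff_dvd _).2 (dvd_mul_right _ _))
  have hcont_scaled : Continuous (fun z => reflectionProduct Γp (p * z)) := by
    unfold reflectionProduct
    fun_prop
  have hzero : reflectionProduct Γp 0 = -1 := by
    rw [reflectionProduct, sub_zero, ← Nat.cast_zero, ← Nat.cast_one, hval, hval]
    simp
  rw [PadicInt.apply_eq_apply_zero_of_periodic hcont_scaled hper z, mul_zero, hzero]

end MoritaGamma

/-- Morita's `p`-adic gamma function (the continuous extension of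
`n ↦ (-1)^n ∏_{0<j<n, p∤j} j`) satisfies the reflection formula
`Γ_p(x)·Γ_p(1-x) = -(-1)^t` where `t ∈ {0,…,p-1}` and `t ≡ -x (mod p)`. -/
theorem moritaGamma_reflection (p : ℕ) [Fact p.Prime] (hodd : Odd p)
    (Γp : ℤ_[p] → ℤ_[p]) (hcont : Continuous Γp)
    (hval : ∀ n : ℕ, Γp (n : ℤ_[p]) =
      (-1) ^ n * ∏ j ∈ (Finset.Ico 1 n).filter (fun j => ¬ (p ∣ j)), (j : ℤ_[p]))
    (x : ℤ_[p]) (t : ℕ) (ht : t < p) (htx : ∃ z : ℤ_[p], x + (t : ℤ_[p]) = p * z) :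
    Γp x * Γp (1 - x) = -(-1 : ℤ_[p]) ^ t := by
  obtain ⟨z, hz⟩ := htx
  have hxt : ‖x + t‖ < 1 := by
    rw [hz, PadicInt.norm_lt_one_iff_dvd]
    exact dvd_mul_right _ _
  have hshift := reflectionProduct_add_natCast (moritaGamma_add_one hcont hval) x t
    fun j hj => PadicInt.not_norm_add_natCast_lt_one hxt ht hj
  rw [reflectionProduct_eq_neg_one_of_norm_lt_one hcont hval hodd hxt] at hshift
  calc reflectionProduct Γp x = (-1) ^ t * ((-1) ^ t * reflectionProduct Γp x) := by
        rw [← mul_assoc, ← mul_pow, neg_one_mul, neg_neg, one_pow, one_mul]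
    _ = -(-1) ^ t := by rw [← hshift, mul_neg_one]
end

section
/- In the hypergeometric system dY/dλ = Y·G_a(λ) with G_a(λ) = [[-a₃/λ, (a₃-a₁)/(1-λ)], [(a₃-a₂)/λ, (a₁+a₂-a₃)/(1-λ)]], the row vector (u₁, u₂) with u₁ = (a₃-a₂)·F(a₁,a₂,a₃+1;λ) and u₂ = a₃·F(a₁,a₂,a₃;λ) is a formal solution, i.e., d/dλ (u₁, u₂) = (u₁, u₂)·G_a(λ) as formal power series identities in ℚ_p[[λ]] (multiplied through by λ(1-λ)). -/
/-!
Compare coefficients of `λ^s`. The first equation is `a₃ - a₂` times the contiguity relation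
`(c + s)·[λ^s]F(a,b,c+1) = c·[λ^s]F(a,b,c)`, which comes from `c·(c+1)_s = (c)_s·(c+s)`.
For the second, multiply by `a₃ + s`: the term `[λ^(s+1)]F` is then eliminated by the ratio
recurrence `(c+s)(s+1)·[λ^(s+1)]F = (a+s)(b+s)·[λ^s]F`, the term `[λ^s]F(a,b,a₃+1)` by
contiguity, and what remains is a polynomial identity in `a₁, a₂, a₃, s`.
-/

open PowerSeries

/-- The Gauss hypergeometric series `F(a,b,c;λ) ∈ ℚ_p[[λ]]`. -/
noncomputable def gaussHGS (p : ℕ) [Fact p.Prime] (a b c : ℚ_[p]) : PowerSeries ℚ_[p] :=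
  PowerSeries.mk fun s =>
    (∏ i ∈ Finset.range s, (a + (i : ℚ_[p]))) * (∏ i ∈ Finset.range s, (b + (i : ℚ_[p]))) /
      ((∏ i ∈ Finset.range s, (c + (i : ℚ_[p]))) * (s.factorial : ℚ_[p]))

lemma mul_prod_range_add_one_add {R : Type*} [CommRing R] (c : R) (n : ℕ) :
    c * ∏ i ∈ Finset.range n, (c + 1 + (i : R)) =
      (∏ i ∈ Finset.range n, (c + (i : R))) * (c + n) := by
  rw [← Finset.prod_range_succ, Finset.prod_range_succ', mul_comm]
  push_cast
  simp only [add_zero, add_right_comm, add_assoc]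

section NotNegNat

variable {K : Type*} [Field K] {c : K}

lemma add_natCast_ne_zero_of_forall_ne_neg (hc : ∀ n : ℕ, c ≠ -(n : K)) (n : ℕ) :
    c + n ≠ 0 :=
  fun h => hc n (eq_neg_of_add_eq_zero_left h)

lemma prod_range_add_ne_zero (hc : ∀ n : ℕ, c ≠ -(n : K)) (n : ℕ) :
    ∏ i ∈ Finset.range n, (c + (i : K)) ≠ 0 :=
  Finset.prod_ne_zero_iff.mpr fun i _ => add_natCast_ne_zero_of_forall_ne_neg hc i

end NotNegNat

lemma coeff_X_mul_derivativeFun {R : Type*} [CommSemiring R] (f : PowerSeries R) (n : ℕ) :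
    coeff n (X * derivativeFun f) = n * coeff n f := by
  cases n with
  | zero => simp
  | succ n =>
    rw [coeff_succ_X_mul, mul_comm]
    exact_mod_cast coeff_derivative f n

section gaussHGS

variable {p : ℕ} [Fact p.Prime] {a b c : ℚ_[p]}

lemma coeff_gaussHGS_succ (hc : ∀ n : ℕ, c ≠ -n) (s : ℕ) :
    coeff (s + 1) (gaussHGS p a b c) * ((c + s) * (s + 1)) =
      coeff s (gaussHGS p a b c) * ((a + s) * (b + s)) := by
  have := add_natCast_ne_zero_of_forall_ne_neg hc s
  have := prod_range_add_ne_zero hc s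
  simp only [gaussHGS, coeff_mk, Finset.prod_range_succ, Nat.factorial_succ]
  push_cast
  field_simp

lemma add_mul_coeff_gaussHGS_add_one (hc : ∀ n : ℕ, c ≠ -n) (s : ℕ) :
    (c + s) * coeff s (gaussHGS p a b (c + 1)) = c * coeff s (gaussHGS p a b c) := by
  have hshift := mul_prod_range_add_one_add c s
  have hR := prod_range_add_ne_zero hc s
  have hR' : ∏ i ∈ Finset.range s, (c + 1 + (i : ℚ_[p])) ≠ 0 :=
    right_ne_zero_of_mul (hshift ▸ mul_ne_zero hR (add_natCast_ne_zero_of_forall_ne_neg hc s))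
  have hk : (s.factorial : ℚ_[p]) ≠ 0 := Nat.cast_ne_zero.mpr s.factorial_ne_zero
  simp only [gaussHGS, coeff_mk]
  field_simp
  linear_combination -(∏ i ∈ Finset.range s, (a + (i : ℚ_[p]))) *
    (∏ i ∈ Finset.range s, (b + (i : ℚ_[p]))) * hshift

end gaussHGS

theorem hypergeometric_formal_solution_general (p : ℕ) [Fact p.Prime] (a₁ a₂ a₃ : ℤ_[p])
    (h3 : ∀ n : ℕ, (a₃ : ℚ_[p]) ≠ -(n : ℚ_[p])) :
    let A₁ : ℚ_[p] := (a₁ : ℚ_[p]); let A₂ : ℚ_[p] := (a₂ : ℚ_[p]); let A₃ : ℚ_[p] := (a₃ : ℚ_[p])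
    let u₁ : PowerSeries ℚ_[p] := C (A₃ - A₂) * gaussHGS p A₁ A₂ (A₃ + 1)
    let u₂ : PowerSeries ℚ_[p] := C A₃ * gaussHGS p A₁ A₂ A₃
    (X * derivativeFun u₁ = C (-A₃) * u₁ + C (A₃ - A₂) * u₂) ∧
    ((1 - X) * derivativeFun u₂ = C (A₃ - A₁) * u₁ + C (A₁ + A₂ - A₃) * u₂) := by
  intro A₁ A₂ A₃ u₁ u₂
  have contiguity := add_mul_coeff_gaussHGS_add_one (a := A₁) (b := A₂) (c := A₃) h3
  have recurrence := coeff_gaussHGS_succ (a := A₁) (b := A₂) (c := A₃) h3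
  constructor
  · ext n
    simp only [coeff_X_mul_derivativeFun, map_add, coeff_C_mul, u₁, u₂]
    linear_combination (A₃ - A₂) * contiguity n
  · ext n
    refine mul_right_cancel₀ (add_natCast_ne_zero_of_forall_ne_neg h3 n) ?_
    have hderiv : coeff n (derivativeFun u₂) = coeff (n + 1) u₂ * (n + 1) :=
      coeff_derivative u₂ n
    rw [sub_mul, one_mul, map_sub, map_add, coeff_X_mul_derivativeFun, hderiv]
    simp only [coeff_C_mul, u₁, u₂]
    linear_combination A₃ * recurrence n - (A₃ - A₁) * (A₃ - A₂) * contiguity n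

/-- The row vector `(u₁, u₂) = ((a₃-a₂)F(a₁,a₂,a₃+1;λ), a₃F(a₁,a₂,a₃;λ))` is a formal
solution of the hypergeometric system `dY/dλ = Y·G_a(λ)`, i.e. (after clearing
denominators) `λ·u₁' = -a₃·u₁ + (a₃-a₂)·u₂` and
`(1-λ)·u₂' = (a₃-a₁)·u₁ + (a₁+a₂-a₃)·u₂` in `ℚ_p[[λ]]`. -/
theorem hypergeometric_formal_solution (p : ℕ) [Fact p.Prime] (a₁ a₂ a₃ : ℤ_[p])
    (h3 : ∀ n : ℕ, (a₃ : ℚ_[p]) ≠ -(n : ℚ_[p]))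
    (h3' : ∀ n : ℕ, (a₃ : ℚ_[p]) + 1 ≠ -(n : ℚ_[p])) :
    let A₁ : ℚ_[p] := (a₁ : ℚ_[p]); let A₂ : ℚ_[p] := (a₂ : ℚ_[p]); let A₃ : ℚ_[p] := (a₃ : ℚ_[p])
    let u₁ : PowerSeries ℚ_[p] := C (A₃ - A₂) * gaussHGS p A₁ A₂ (A₃ + 1)
    let u₂ : PowerSeries ℚ_[p] := C A₃ * gaussHGS p A₁ A₂ A₃
    (X * derivativeFun u₁ = C (-A₃) * u₁ + C (A₃ - A₂) * u₂) ∧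
    ((1 - X) * derivativeFun u₂ = C (A₃ - A₁) * u₁ + C (A₁ + A₂ - A₃) * u₂) :=
  hypergeometric_formal_solution_general p a₁ a₂ a₃ h3
end

section
/- If a 2×2 matrix γ over a p-adic Banach algebra has block form [[pA, pB],[C, D]] with ‖A‖,‖B‖,‖C‖,‖D‖ ≤ 1 and D invertible with ‖D^{-1}‖ ≤ 1, and (ηu, u) is a row eigenvector with unit eigenvalue ξ (|ξ| = 1) under the semilinear action v ↦ φ*(v)·γ, then η = (pA·φ*(η) + C)·(pB·φ*(η) + D)^{-1} and ‖η‖ ≤ 1. -/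
/-!
Writing `P = pA·φ(η) + C` and `M = pB·φ(η) + D`, the two eigenvector equations say
`φ(u)·P = ξ·η·u` and `φ(u)·M = ξ·u`. The second makes `φ(u)` and `M` units, and cancelling
`φ(u)` gives `η·M = P`. For the norm, the units `ξ`, `u` have inverses of norm at most one, so
`‖η‖ ≤ ‖φ(u)·P‖ ≤ max (‖p‖·‖η‖) 1` by the ultrametric inequality, and `‖p‖ < 1` forces
`‖η‖ ≤ 1`.
-/

theorem eq_mul_inverse_of_mul_eq_of_mul_eq {M₀ : Type*} [CommMonoidWithZero M₀]
    {a x y z c : M₀} (hc : IsUnit c) (hx : a * x = z * c) (hy : a * y = c) :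
    z = x * Ring.inverse y := by
  have hay : IsUnit (a * y) := hy ▸ hc
  rw [Ring.eq_mul_inverse_iff_mul_eq _ _ _ (isUnit_of_mul_isUnit_right hay)]
  apply (isUnit_of_mul_isUnit_left hay).mul_left_cancel
  rw [hx, ← hy, mul_left_comm]

theorem norm_le_norm_mul_of_mul_eq_one {R : Type*} [SeminormedRing R] {a b : R}
    (hba : b * a = 1) (hb : ‖b‖ ≤ 1) (x : R) : ‖x‖ ≤ ‖a * x‖ :=
  calc ‖x‖ = ‖b * (a * x)‖ := by rw [← mul_assoc, hba, one_mul]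
    _ ≤ 1 * ‖a * x‖ := norm_mul_le_of_le hb le_rfl
    _ = ‖a * x‖ := one_mul _

theorem le_one_of_le_max_mul {α : Type*} [Ring α] [LinearOrder α] [IsStrictOrderedRing α]
    {c x : α} (hc : c < 1) (h : x ≤ max (c * x) 1) : x ≤ 1 := by
  by_contra! hx
  have hcx : c * x < x := by simpa using mul_lt_mul_of_pos_right hc (zero_lt_one.trans hx)
  exact (max_lt hcx hx).not_ge h

theorem unit_eigenvector_eta_general (p : ℕ) [Fact p.Prime]
    (R : Type*) [NormedCommRing R]
    (hna : ∀ x y : R, ‖x + y‖ ≤ max ‖x‖ ‖y‖)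
    (hp : ‖(p : R)‖ = 1 / p)
    (φ : R →+* R) (hφ : ∀ x : R, ‖φ x‖ ≤ ‖x‖)
    (A B C D : R) (hA : ‖A‖ ≤ 1) (hC : ‖C‖ ≤ 1)
    (u uinv : R) (huinv : u * uinv = 1) (hu : ‖u‖ = 1) (huin : ‖uinv‖ = 1)
    (ξ : R) (hξu : IsUnit ξ) (hξinv : ‖Ring.inverse ξ‖ = 1)
    (η : R)
    (heig1 : φ (η * u) * ((p : R) * A) + φ u * C = ξ * (η * u))
    (heig2 : φ (η * u) * ((p : R) * B) + φ u * D = ξ * u) :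
    η = ((p : R) * A * φ η + C) * Ring.inverse ((p : R) * B * φ η + D) ∧ ‖η‖ ≤ 1 := by
  rw [map_mul] at heig1 heig2
  set P := (p : R) * A * φ η + C
  have hP : φ u * P = η * (ξ * u) := by linear_combination heig1
  have hM : φ u * ((p : R) * B * φ η + D) = ξ * u := by linear_combination heig2
  have hp1 : ‖(p : R)‖ < 1 := by
    rw [hp, one_div]
    exact inv_lt_one_of_one_lt₀ (Nat.one_lt_cast.mpr (Fact.out : p.Prime).one_lt)
  refine ⟨eq_mul_inverse_of_mul_eq_of_mul_eq (hξu.mul (.of_mul_eq_one _ huinv)) hP hM,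
    le_one_of_le_max_mul hp1 ?_⟩
  calc ‖η‖ ≤ ‖u * η‖ := norm_le_norm_mul_of_mul_eq_one (by rw [mul_comm, huinv]) huin.le η
    _ ≤ ‖ξ * (u * η)‖ := norm_le_norm_mul_of_mul_eq_one (Ring.inverse_mul_cancel ξ hξu)
        hξinv.le _
    _ = ‖φ u * P‖ := by rw [hP]; ring_nf
    _ ≤ 1 * ‖P‖ := norm_mul_le_of_le ((hφ u).trans hu.le) le_rfl
    _ ≤ max (‖(p : R)‖ * ‖η‖) 1 := by
      rw [one_mul]
      refine (hna _ _).trans (max_le_max ?_ hC)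
      simpa using norm_mul_le_of_le (norm_mul_le_of_le le_rfl hA) (hφ η)

/-- If `(ηu, u)` is a row eigenvector with unit eigenvalue `ξ` (`|ξ| = 1`) of the
semilinear Frobenius action `v ↦ φ*(v)·[[pA, pB],[C, D]]`, where `‖A‖,‖B‖,‖C‖,‖D‖ ≤ 1`
and `D` is invertible with `‖D⁻¹‖ ≤ 1`, then `η = (pA·φ*(η) + C)·(pB·φ*(η) + D)⁻¹`
and `‖η‖ ≤ 1`. -/
theorem unit_eigenvector_eta (p : ℕ) [Fact p.Prime]
    (R : Type*) [NormedCommRing R]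
    (hna : ∀ x y : R, ‖x + y‖ ≤ max ‖x‖ ‖y‖)
    (hp : ‖(p : R)‖ = 1 / p)
    (φ : R →+* R) (hφ : ∀ x : R, ‖φ x‖ ≤ ‖x‖)
    (A B C D : R) (hA : ‖A‖ ≤ 1) (hB : ‖B‖ ≤ 1) (hC : ‖C‖ ≤ 1) (hD : ‖D‖ ≤ 1)
    (Dinv : R) (hDinv : D * Dinv = 1) (hDinvn : ‖Dinv‖ ≤ 1)
    (u uinv : R) (huinv : u * uinv = 1) (hu : ‖u‖ = 1) (huin : ‖uinv‖ = 1)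
    (ξ : R) (hξu : IsUnit ξ) (hξ : ‖ξ‖ = 1) (hξinv : ‖Ring.inverse ξ‖ = 1)
    (η : R)
    (heig1 : φ (η * u) * ((p : R) * A) + φ u * C = ξ * (η * u))
    (heig2 : φ (η * u) * ((p : R) * B) + φ u * D = ξ * u) :
    η = ((p : R) * A * φ η + C) * Ring.inverse ((p : R) * B * φ η + D) ∧ ‖η‖ ≤ 1 :=
  unit_eigenvector_eta_general p R hna hp φ hφ A B C D hA hC u uinv huinv hu huin ξ hξu hξinv η
    heig1 heig2
end
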